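/- (Proposition 2, multi-dimensional rate equality.) Let θ ∈ [0,1] be real, D a positive integer, N_1,…,N_D positive integers, and fix a dimension d' ∈ {1,…,D}. Let Y be the D-dimensional array with dimension sizes M_d, where M_d = N_d for d ≠ d' and M_{d'} = N_{d'}+1, and let X be embedded in Y agreeing in all dimensions d ≠ d' and, in dimension d', consisting either of the first N_{d'} positions (initial boundary shared) or of the last N_{d'} positions (terminal boundary shared). Under the product over d of original-construction candidate-patch distributions on sizes M_d, let P_Y(restriction nonempty) be the probability that in every dimension d the patch interval {s_d,…,s_d+l_d−1} intersects the corresponding index set of X. Then (∏_{d=1}^D M_d)·P_Y(restriction nonempty) = (∏_{d=1}^D N_d)·∏_{d=1}^D (θ+(1−θ)·N_d)/N_d = ∏_{d=1}^D (θ+(1−θ)·N_d), where the middle expression is ∏_d N_d times the probability that a candidate patch on X is nonempty. -/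

import Mathlib

/-- Initial-position factor `c`: `c θ 1 = 1`, `c θ s = 1 - θ` for `s ≥ 2`. -/
noncomputable def c (θ : ℝ) (s : ℕ) : ℝ := if s = 1 then 1 else 1 - θ

/-- Truncated geometric side-length distribution on dimension size `N` given start `s`. -/
noncomputable def q (θ : ℝ) (N s l : ℕ) : ℝ :=
  if l = N - s + 1 then θ ^ (N - s) else θ ^ (l - 1) * (1 - θ)

/-- Conditional law of the side-length `l` given the start `s` in the original construction. -/
noncomputable def condL (θ : ℝ) (N s l : ℕ) : ℝ :=
  if l = 0 then (if s = 1 then 0 else θ) else c θ s * q θ N s l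

/-- The original-construction candidate-patch distribution on dimension size `N`. -/
noncomputable def origP (θ : ℝ) (N : ℕ) (p : ℕ × ℕ) : ℝ :=
  if 1 ≤ p.1 ∧ p.1 ≤ N ∧ p.2 ≤ N - p.1 + 1 then (1 / (N : ℝ)) * condL θ N p.1 p.2 else 0

/-!
The event "every patch interval meets `X`" is a product of one-dimensional events, so under the
product law the rate factorises over dimensions. Summing the conditional law over `l ≥ 1` gives
`c θ s`, since the truncated geometric law `q` is normalised; hence a dimension of size `N`
contributes `∑ₛ c θ s / N = (θ + (1 - θ) N) / N`. In the enlarged dimension of size `N + 1`, the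
nonempty patches missing `X` are those starting at `N + 1` (initial boundary shared), of total
mass `(1 - θ) / (N + 1)`, or the single patch `(1, 1)` (terminal boundary shared), of the same
mass. Either way the rate is `(θ + (1 - θ) N) / (N + 1)`.
-/

open Finset

theorem sum_piFinset_ite_forall_eq_prod_sum {ι R : Type*} {κ : ι → Type*} [Fintype ι]
    [DecidableEq ι] [CommSemiring R] (S : ∀ i, Finset (κ i)) (P : ∀ i, κ i → Prop)
    [∀ i, DecidablePred (P i)] [DecidablePred fun f : ∀ i, κ i => ∀ i, P i (f i)]
    (w : ∀ i, κ i → R) :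
    (∑ f ∈ Fintype.piFinset S, if ∀ i, P i (f i) then ∏ i, w i (f i) else 0) =
      ∏ i, ∑ a ∈ S i, if P i a then w i a else 0 := by
  simp_rw [prod_univ_sum, Fintype.prod_ite_zero]
  congr!

theorem pow_add_sum_Icc_pow_mul_one_sub (θ : ℝ) (k : ℕ) :
    θ ^ k + ∑ l ∈ Icc 1 k, θ ^ (l - 1) * (1 - θ) = 1 := by
  induction k with
  | zero => simp
  | succ k ih =>
    rw [sum_Icc_succ_top (by omega), Nat.add_sub_cancel, pow_succ]
    linarith

theorem sum_q_eq_one (θ : ℝ) {N s : ℕ} :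
    ∑ l ∈ Icc 1 (N - s + 1), q θ N s l = 1 := by
  have hlast : q θ N s (N - s + 1) = θ ^ (N - s) := if_pos rfl
  have hgeom : ∀ l ∈ Icc 1 (N - s), q θ N s l = θ ^ (l - 1) * (1 - θ) :=
    fun l hl => if_neg (by rw [mem_Icc] at hl; omega)
  rw [sum_Icc_succ_top (by omega), hlast, sum_congr rfl hgeom, add_comm,
    pow_add_sum_Icc_pow_mul_one_sub]

theorem sum_origP_length_pos_of_start (θ : ℝ) {N s : ℕ} (h1 : 1 ≤ s) (h2 : s ≤ N) :
    ∑ l ∈ Icc 0 N, (if 1 ≤ l then origP θ N (s, l) else 0) = c θ s / N := by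
  have hfilter : (Icc 0 N).filter (1 ≤ ·) = Icc 1 N := by ext; simp; omega
  have hvanish : ∀ l ∈ Icc 1 N, l ∉ Icc 1 (N - s + 1) → origP θ N (s, l) = 0 := by
    intro l hlN hl
    rw [mem_Icc] at hlN hl
    exact if_neg (by dsimp only; omega)
  have hval : ∀ l ∈ Icc 1 (N - s + 1), origP θ N (s, l) = c θ s / N * q θ N s l := by
    intro l hl
    rw [mem_Icc] at hl
    rw [origP, if_pos ⟨h1, h2, hl.2⟩, condL, if_neg (by omega)]
    ring
  rw [← sum_filter, hfilter, ← sum_subset (Icc_subset_Icc_right (by omega)) hvanish,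
    sum_congr rfl hval, ← mul_sum, sum_q_eq_one, mul_one]

theorem sum_c_Icc (θ : ℝ) {N : ℕ} (hN : 1 ≤ N) :
    ∑ s ∈ Icc 1 N, c θ s = θ + (1 - θ) * N := by
  have hrest : ∀ s ∈ Ioc 1 N, c θ s = 1 - θ :=
    fun s hs => if_neg (by rw [mem_Ioc] at hs; omega)
  rw [← sum_Ioc_add_eq_sum_Icc hN, sum_congr rfl hrest, sum_const, Nat.card_Ioc, nsmul_eq_mul,
    Nat.cast_sub hN, c, if_pos rfl]
  push_cast
  ring

theorem sum_origP_length_pos_of_subset_Icc (θ : ℝ) {N : ℕ} {T : Finset ℕ} (hT : T ⊆ Icc 1 N) :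
    ∑ p ∈ T ×ˢ Icc 0 N, (if 1 ≤ p.2 then origP θ N p else 0) = (∑ s ∈ T, c θ s) / N := by
  rw [sum_product, sum_div]
  refine sum_congr rfl fun s hs => ?_
  have hs := mem_Icc.mp (hT hs)
  exact sum_origP_length_pos_of_start θ hs.1 hs.2

theorem sum_origP_length_pos (θ : ℝ) {N : ℕ} (hN : 1 ≤ N) :
    ∑ p ∈ Icc 1 N ×ˢ Icc 0 N, (if 1 ≤ p.2 then origP θ N p else 0) = (θ + (1 - θ) * N) / N := by
  rw [sum_origP_length_pos_of_subset_Icc θ subset_rfl, sum_c_Icc θ hN]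

theorem sum_origP_length_pos_start_le (θ : ℝ) {N : ℕ} (hN : 1 ≤ N) :
    ∑ p ∈ Icc 1 (N + 1) ×ˢ Icc 0 (N + 1), (if 1 ≤ p.2 ∧ p.1 ≤ N then origP θ (N + 1) p else 0) =
      (θ + (1 - θ) * N) / (N + 1 : ℕ) := by
  have hfilter : (Icc 1 (N + 1) ×ˢ Icc 0 (N + 1)).filter (fun p => 1 ≤ p.2 ∧ p.1 ≤ N) =
      (Icc 1 N ×ˢ Icc 0 (N + 1)).filter (fun p => 1 ≤ p.2) := by
    ext; simp only [mem_filter, mem_product, mem_Icc]; omega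
  rw [← sum_filter, hfilter, sum_filter, sum_origP_length_pos_of_subset_Icc θ
    (Icc_subset_Icc_right (by omega)), sum_c_Icc θ hN]

theorem sum_origP_length_pos_end_ge_two (θ : ℝ) {N : ℕ} (hN : 1 ≤ N) :
    ∑ p ∈ Icc 1 (N + 1) ×ˢ Icc 0 (N + 1),
        (if 1 ≤ p.2 ∧ 2 ≤ p.1 + p.2 - 1 then origP θ (N + 1) p else 0) =
      (θ + (1 - θ) * N) / (N + 1 : ℕ) := by
  set S := (Icc 1 (N + 1) ×ˢ Icc 0 (N + 1)).filter (fun p => 1 ≤ p.2)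
  have hfilter : (Icc 1 (N + 1) ×ˢ Icc 0 (N + 1)).filter (fun p => 1 ≤ p.2 ∧ 2 ≤ p.1 + p.2 - 1) =
      S.erase (1, 1) := by
    ext ⟨s, l⟩; simp only [S, mem_filter, mem_erase, mem_product, mem_Icc, ne_eq, Prod.mk.injEq]
    omega
  have hunit : origP θ (N + 1) (1, 1) = (1 - θ) / (N + 1 : ℕ) := by
    rw [origP, if_pos (by omega), condL, if_neg one_ne_zero, c, if_pos rfl, q, if_neg (by omega)]
    ring
  rw [← sum_filter, hfilter, sum_erase_eq_sub (by simp [S]), sum_filter,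
    sum_origP_length_pos θ (by omega), hunit]
  push_cast
  ring

theorem spp_multidim_rate_equality_general (θ : ℝ)
    (D : ℕ) (N : Fin D → ℕ) (hN : ∀ d, 0 < N d)
    (d' : Fin D) (initial : Bool) (M : Fin D → ℕ)
    (hM : ∀ d, M d = if d = d' then N d + 1 else N d) :
    (∏ d, (M d : ℝ)) *
      (∑ f ∈ Fintype.piFinset (fun d => Finset.Icc 1 (M d) ×ˢ Finset.Icc 0 (M d)),
        if (∀ d, 1 ≤ (f d).2 ∧
              (d = d' → if initial then (f d).1 ≤ N d' else 2 ≤ (f d).1 + (f d).2 - 1)) then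
          ∏ d, origP θ (M d) (f d)
        else 0)
      = (∏ d, (N d : ℝ)) * ∏ d, (θ + (1 - θ) * N d) / N d ∧
    (∏ d, (N d : ℝ)) * (∏ d, (θ + (1 - θ) * N d) / N d) = ∏ d, (θ + (1 - θ) * N d) := by
  have hM_pos : ∀ d, 0 < M d := fun d => by rw [hM d]; split_ifs <;> grind
  have hcancel : (∏ d, (N d : ℝ)) * (∏ d, (θ + (1 - θ) * N d) / N d) =
      ∏ d, (θ + (1 - θ) * N d) := by
    rw [← prod_mul_distrib]
    exact prod_congr rfl fun d _ => mul_div_cancel₀ _ (Nat.cast_ne_zero.mpr (hN d).ne')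
  have hdim : ∀ d, ∑ p ∈ Icc 1 (M d) ×ˢ Icc 0 (M d),
      (if 1 ≤ p.2 ∧ (d = d' → if initial then p.1 ≤ N d' else 2 ≤ p.1 + p.2 - 1) then
        origP θ (M d) p else 0) = (θ + (1 - θ) * N d) / M d := by
    intro d
    by_cases hd : d = d'
    · subst hd
      rw [hM d, if_pos rfl]
      cases initial
      · simpa using sum_origP_length_pos_end_ge_two θ (hN d)
      · simpa using sum_origP_length_pos_start_le θ (hN d)
    · rw [hM d, if_neg hd]
      simpa [hd] using sum_origP_length_pos θ (hN d)
  refine ⟨?_, hcancel⟩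
  rw [hcancel, sum_piFinset_ite_forall_eq_prod_sum (P := fun d (p : ℕ × ℕ) =>
      1 ≤ p.2 ∧ (d = d' → if initial then p.1 ≤ N d' else 2 ≤ p.1 + p.2 - 1)),
    prod_congr rfl fun d _ => hdim d, ← prod_mul_distrib]
  exact prod_congr rfl fun d _ => mul_div_cancel₀ _ (Nat.cast_ne_zero.mpr (hM_pos d).ne')

/-- Proposition 2, multi-dimensional rate equality: `Y` has sizes `M_d` (`M_d = N_d` for
`d ≠ d'`, `M_{d'} = N_{d'} + 1`), and `X ⊆ Y` agrees in all dimensions `d ≠ d'` and, in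
dimension `d'`, consists of the first (`initial = true`) or last (`initial = false`)
`N_{d'}` positions.  Then
`(∏_d M_d)·P_Y(restriction nonempty) = (∏_d N_d)·∏_d (θ+(1−θ)·N_d)/N_d = ∏_d (θ+(1−θ)·N_d)`.
In dimension `d ≠ d'` the patch interval intersects `X` iff `l_d ≥ 1`; in dimension `d'`
it intersects iff `l ≥ 1 ∧ s ≤ N_{d'}` (initial boundary shared) or
`l ≥ 1 ∧ s + l − 1 ≥ 2` (terminal boundary shared). -/
theorem spp_multidim_rate_equality (θ : ℝ) (hθ0 : 0 ≤ θ) (hθ1 : θ ≤ 1)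
    (D : ℕ) (hD : 0 < D) (N : Fin D → ℕ) (hN : ∀ d, 0 < N d)
    (d' : Fin D) (initial : Bool) (M : Fin D → ℕ)
    (hM : ∀ d, M d = if d = d' then N d + 1 else N d) :
    (∏ d, (M d : ℝ)) *
      (∑ f ∈ Fintype.piFinset (fun d => Finset.Icc 1 (M d) ×ˢ Finset.Icc 0 (M d)),
        if (∀ d, 1 ≤ (f d).2 ∧
              (d = d' → if initial then (f d).1 ≤ N d' else 2 ≤ (f d).1 + (f d).2 - 1)) then
          ∏ d, origP θ (M d) (f d)
        else 0)
      = (∏ d, (N d : ℝ)) * ∏ d, (θ + (1 - θ) * N d) / N d ∧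
    (∏ d, (N d : ℝ)) * (∏ d, (θ + (1 - θ) * N d) / N d) = ∏ d, (θ + (1 - θ) * N d) :=
  spp_multidim_rate_equality_general θ D N hN d' initial M hM
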